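/- In the CRWL-theory β(T) simulating an RL-theory T = (Σ, E, Γ), if E ⊢ t = t' in unsorted unconditional equational logic for terms t, t' over Σ, then β(T) ⊢_CRWL R(t,t') → true and β(T) ⊢_CRWL R(t',t) → true. -/
import Mathlib


/-- Expressions of the CRWL-theory `β(T)` simulating an RL-theory over a ranked
alphabet `Op`: constructors are the symbols of `Op` plus `true`, and there is one
binary defined function symbol `R`; `⊥` and variables are also available. -/
inductive BExpr (Op : ℕ → Type) : Type
  | bot : BExpr Op
  | var : ℕ → BExpr Op
  | tt : BExpr Op
  | op : ∀ {n : ℕ}, Op n → (Fin n → BExpr Op) → BExpr Op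
  | R : BExpr Op → BExpr Op → BExpr Op

namespace BExpr

/-- Substitution. -/
def sub {Op : ℕ → Type} (θ : ℕ → BExpr Op) : BExpr Op → BExpr Op
  | .bot => .bot
  | .var n => θ n
  | .tt => .tt
  | .op f args => .op f (fun i => (args i).sub θ)
  | .R a b => .R (a.sub θ) (b.sub θ)

/-- Partial terms: no occurrence of the defined symbol `R`. -/
def isPTerm {Op : ℕ → Type} : BExpr Op → Prop
  | .bot => True
  | .var _ => True
  | .tt => True
  | .op _ args => ∀ i, (args i).isPTerm
  | .R _ _ => False

/-- Total terms: no `R` and no `⊥`. -/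
def isTotal {Op : ℕ → Type} : BExpr Op → Prop
  | .bot => False
  | .var _ => True
  | .tt => True
  | .op _ args => ∀ i, (args i).isTotal
  | .R _ _ => False

/-- Terms of the original RL-signature `Op` (with variables): no `R`, no `⊥`,
no `true`. -/
def isSTerm {Op : ℕ → Type} : BExpr Op → Prop
  | .bot => False
  | .var _ => True
  | .tt => False
  | .op _ args => ∀ i, (args i).isSTerm
  | .R _ _ => False

/-- Variables occurring in an expression. -/
def vars {Op : ℕ → Type} : BExpr Op → Set ℕ
  | .bot => ∅
  | .var n => {n}
  | .tt => ∅
  | .op _ args => ⋃ i, (args i).vars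
  | .R a b => a.vars ∪ b.vars

end BExpr

/-- A CRWL program rule `lhs → rhs ⇐ conds` with a set of joinability conditions. -/
structure BRule (Op : ℕ → Type) where
  lhs : BExpr Op
  rhs : BExpr Op
  conds : Set (BExpr Op × BExpr Op)

/-- A conditional rewrite rule of the original RL-theory `T`. -/
structure RLRule (Op : ℕ → Type) where
  lhs : BExpr Op
  rhs : BExpr Op
  conds : Set (BExpr Op × BExpr Op)

/-- Joinability conditions `v ⋈ v` for every variable of the given expressions
(the effect of linearisation: each variable may only be instantiated by a total
term). -/
def jvars {Op : ℕ → Type} (V : Set ℕ) : Set (BExpr Op × BExpr Op) :=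
  {p | ∃ v ∈ V, p = (.var v, .var v)}

/-- The program rules of the CRWL-theory `β(T)` for `T = (Op, E, G)`:
reflexivity, transitivity and congruence rules for `R`, the (linearised) rules
`R(t,t') → true` and `R(t',t) → true` for each equation `t = t'` in `E`, and the
(linearised) translations of the rewrite rules in `G`. -/
def betaRules (Op : ℕ → Type) (E : Set (BExpr Op × BExpr Op))
    (G : Set (RLRule Op)) : Set (BRule Op) :=
  -- Reflexivity: R(x₁,x₂) → true ⇐ x₁ ⋈ x₂
  {⟨.R (.var 0) (.var 1), .tt, {(.var 0, .var 1)}⟩} ∪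
  -- Transitivity: R(x,y) → true ⇐ R(x,z) ⋈ true, R(z,y) ⋈ true
  {⟨.R (.var 0) (.var 1), .tt,
    {(.R (.var 0) (.var 2), .tt), (.R (.var 2) (.var 1), .tt)}⟩} ∪
  -- Congruence: R(f(x̄), f(ȳ)) → true ⇐ R(xᵢ,yᵢ) ⋈ true
  {r | ∃ (n : ℕ) (f : Op n), r =
    ⟨.R (.op f fun i => .var i.val) (.op f fun i => .var (n + i.val)), .tt,
      {p | ∃ i : Fin n, p = (.R (.var i.val) (.var (n + i.val)), .tt)}⟩} ∪
  -- Equations: (linearised) R(t,t') → true and R(t',t) → true for t = t' in E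
  {r | ∃ e ∈ E, r = ⟨.R e.1 e.2, .tt, jvars (e.1.vars ∪ e.2.vars)⟩ ∨
                r = ⟨.R e.2 e.1, .tt, jvars (e.1.vars ∪ e.2.vars)⟩} ∪
  -- Rewrite rules: (linearised) R(l,r) → true ⇐ R(aᵢ,bᵢ) ⋈ true, ...
  {r | ∃ ρ ∈ G, r = ⟨.R ρ.lhs ρ.rhs, .tt,
    ((fun p : BExpr Op × BExpr Op => ((.R p.1 p.2 : BExpr Op), (.tt : BExpr Op)))
      '' ρ.conds) ∪
    jvars (ρ.lhs.vars ∪ ρ.rhs.vars ∪ ⋃ p ∈ ρ.conds, p.1.vars ∪ p.2.vars)⟩}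

mutual
  /-- CRWL reduction statements derivable from a program `Γ`. -/
  inductive BRed (Op : ℕ → Type) (Γ : Set (BRule Op)) :
      BExpr Op → BExpr Op → Prop
    | bot (e : BExpr Op) : BRed Op Γ e .bot
    | refl (e : BExpr Op) : BRed Op Γ e e
    | monoOp {n : ℕ} (f : Op n) {a a' : Fin n → BExpr Op} :
        (∀ i, BRed Op Γ (a i) (a' i)) → BRed Op Γ (.op f a) (.op f a')
    | monoR {a a' b b' : BExpr Op} :
        BRed Op Γ a a' → BRed Op Γ b b' → BRed Op Γ (.R a b) (.R a' b')
    | red {r : BRule Op} (hr : r ∈ Γ) (θ : ℕ → BExpr Op)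
        (hθ : ∀ n, (θ n).isPTerm)
        (hc : ∀ p ∈ r.conds, BJoin Op Γ (p.1.sub θ) (p.2.sub θ)) :
        BRed Op Γ (r.lhs.sub θ) (r.rhs.sub θ)
    | trans {a b e : BExpr Op} :
        BRed Op Γ a b → BRed Op Γ b e → BRed Op Γ a e

  /-- CRWL joinability statements derivable from a program `Γ`. -/
  inductive BJoin (Op : ℕ → Type) (Γ : Set (BRule Op)) :
      BExpr Op → BExpr Op → Prop
    | join {a b t : BExpr Op} :
        BRed Op Γ a t → BRed Op Γ b t → t.isTotal → BJoin Op Γ a b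
end


/-- Unsorted unconditional equational deduction `E ⊢ t = t'` on terms over the
RL-signature `Op` (represented as the `R`-, `⊥`-, `true`-free expressions):
substitution instances of equations, reflexivity, symmetry, transitivity and
congruence. -/
inductive EqD (Op : ℕ → Type) (E : Set (BExpr Op × BExpr Op)) :
    BExpr Op → BExpr Op → Prop
  | ax {p : BExpr Op × BExpr Op} (hp : p ∈ E) (θ : ℕ → BExpr Op)
      (hθ : ∀ n, (θ n).isSTerm) : EqD Op E (p.1.sub θ) (p.2.sub θ)
  | refl (t : BExpr Op) : EqD Op E t t
  | symm {t t' : BExpr Op} : EqD Op E t t' → EqD Op E t' t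
  | trans {t t' t'' : BExpr Op} :
      EqD Op E t t' → EqD Op E t' t'' → EqD Op E t t''
  | congr {n : ℕ} (f : Op n) {a a' : Fin n → BExpr Op} :
      (∀ i, EqD Op E (a i) (a' i)) → EqD Op E (.op f a) (.op f a')


namespace BetaAux

open BExpr

variable {Op : ℕ → Type}

theorem sterm_total {e : BExpr Op} (h : e.isSTerm) : e.isTotal := by
  induction e with
  | bot => exact h
  | var n => trivial
  | tt => trivial
  | op f args ih => exact fun i => ih i (h i)
  | R a b iha ihb => exact h

theorem total_pterm {e : BExpr Op} (h : e.isTotal) : e.isPTerm := by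
  induction e with
  | bot => trivial
  | var n => trivial
  | tt => trivial
  | op f args ih => exact fun i => ih i (h i)
  | R a b iha ihb => exact h

theorem sterm_pterm {e : BExpr Op} (h : e.isSTerm) : e.isPTerm :=
  total_pterm (sterm_total h)

theorem joinSelf {Γ : Set (BRule Op)} {e : BExpr Op} (h : e.isTotal) :
    BJoin Op Γ e e := .join (.refl e) (.refl e) h

theorem joinTT {Γ : Set (BRule Op)} {e : BExpr Op} (h : BRed Op Γ e .tt) :
    BJoin Op Γ e .tt := .join h (.refl _) trivial

variable (E : Set (BExpr Op × BExpr Op)) (G : Set (RLRule Op))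

theorem redRefl {t : BExpr Op} (ht : t.isSTerm) :
    BRed Op (betaRules Op E G) (.R t t) .tt := by
  have hr : (⟨.R (.var 0) (.var 1), .tt, {((.var 0 : BExpr Op), (.var 1 : BExpr Op))}⟩ : BRule Op)
      ∈ betaRules Op E G := Or.inl (Or.inl (Or.inl (Or.inl rfl)))
  have := BRed.red (Op := Op) (Γ := betaRules Op E G) hr (fun _ => t)
    (fun _ => sterm_pterm ht)
    (by
      rintro p hp
      have : p = ((.var 0 : BExpr Op), (.var 1 : BExpr Op)) := hp
      subst this
      exact joinSelf (sterm_total ht))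
  simpa [BExpr.sub] using this

theorem redTrans {t t' t'' : BExpr Op}
    (ht : t.isSTerm) (ht' : t'.isSTerm) (ht'' : t''.isSTerm)
    (h1 : BRed Op (betaRules Op E G) (.R t t') .tt)
    (h2 : BRed Op (betaRules Op E G) (.R t' t'') .tt) :
    BRed Op (betaRules Op E G) (.R t t'') .tt := by
  have hr : (⟨.R (.var 0) (.var 1), .tt,
      {((.R (.var 0) (.var 2) : BExpr Op), (.tt : BExpr Op)),
       ((.R (.var 2) (.var 1) : BExpr Op), (.tt : BExpr Op))}⟩ : BRule Op)
      ∈ betaRules Op E G := Or.inl (Or.inl (Or.inl (Or.inr rfl)))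
  classical
  set θ : ℕ → BExpr Op := fun n => if n = 0 then t else if n = 1 then t'' else t' with hθdef
  have := BRed.red (Op := Op) (Γ := betaRules Op E G) hr θ
    (by
      intro n
      simp only [hθdef]
      split
      · exact sterm_pterm ht
      · split
        · exact sterm_pterm ht''
        · exact sterm_pterm ht')
    (by
      rintro p hp
      rcases hp with h | h
      · subst h; simpa [BExpr.sub, hθdef] using joinTT h1
      · have : p = ((.R (.var 2) (.var 1) : BExpr Op), (.tt : BExpr Op)) := h
        subst this; simpa [BExpr.sub, hθdef] using joinTT h2)
  simpa [BExpr.sub, hθdef] using this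

theorem sterm_sub {θ : ℕ → BExpr Op} (hθ : ∀ n, (θ n).isSTerm) {e : BExpr Op}
    (h : e.isSTerm) : (e.sub θ).isSTerm := by
  induction e with
  | bot => exact h
  | var n => exact hθ n
  | tt => exact h
  | op f args ih => exact fun i => ih i (h i)
  | R a b iha ihb => exact h

theorem redAx {e : BExpr Op × BExpr Op} (he : e ∈ E) (θ : ℕ → BExpr Op)
    (hθ : ∀ n, (θ n).isSTerm) :
    BRed Op (betaRules Op E G) (.R (e.1.sub θ) (e.2.sub θ)) .tt ∧
    BRed Op (betaRules Op E G) (.R (e.2.sub θ) (e.1.sub θ)) .tt := by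
  constructor
  · have hr : (⟨.R e.1 e.2, .tt, jvars (e.1.vars ∪ e.2.vars)⟩ : BRule Op)
        ∈ betaRules Op E G := Or.inl (Or.inr ⟨e, he, Or.inl rfl⟩)
    have := BRed.red (Op := Op) (Γ := betaRules Op E G) hr θ
      (fun n => sterm_pterm (hθ n))
      (by
        rintro p ⟨v, hv, rfl⟩
        exact joinSelf (sterm_total (hθ v)))
    simpa [BExpr.sub] using this
  · have hr : (⟨.R e.2 e.1, .tt, jvars (e.1.vars ∪ e.2.vars)⟩ : BRule Op)
        ∈ betaRules Op E G := Or.inl (Or.inr ⟨e, he, Or.inr rfl⟩)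
    have := BRed.red (Op := Op) (Γ := betaRules Op E G) hr θ
      (fun n => sterm_pterm (hθ n))
      (by
        rintro p ⟨v, hv, rfl⟩
        exact joinSelf (sterm_total (hθ v)))
    simpa [BExpr.sub] using this

theorem redCongr {n : ℕ} (f : Op n) {a a' : Fin n → BExpr Op}
    (ha : ∀ i, (a i).isSTerm) (ha' : ∀ i, (a' i).isSTerm)
    (h : ∀ i, BRed Op (betaRules Op E G) (.R (a i) (a' i)) .tt) :
    BRed Op (betaRules Op E G) (.R (.op f a) (.op f a')) .tt := by
  classical
  have hr : (⟨.R (.op f fun i => .var i.val) (.op f fun i => .var (n + i.val)), .tt,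
      {p | ∃ i : Fin n, p = (.R (.var i.val) (.var (n + i.val)), .tt)}⟩ : BRule Op)
      ∈ betaRules Op E G := Or.inl (Or.inl (Or.inr ⟨n, f, rfl⟩))
  set θ : ℕ → BExpr Op := fun m =>
    if h1 : m < n then a ⟨m, h1⟩
    else if h2 : m - n < n then a' ⟨m - n, h2⟩ else .var m with hθdef
  have hθ1 : ∀ i : Fin n, θ i.val = a i := by
    intro i
    simp [hθdef, i.isLt]
  have hθ2 : ∀ i : Fin n, θ (n + i.val) = a' i := by
    intro i
    have h1 : ¬ (n + i.val < n) := by omega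
    have h2 : n + i.val - n = i.val := by omega
    simp [hθdef, h1, h2, i.isLt]
  have := BRed.red (Op := Op) (Γ := betaRules Op E G) hr θ
    (by
      intro m
      simp only [hθdef]
      split
      · exact sterm_pterm (ha _)
      · split
        · exact sterm_pterm (ha' _)
        · trivial)
    (by
      rintro p ⟨i, rfl⟩
      simpa [BExpr.sub, hθ1 i, hθ2 i] using joinTT (h i))
  simpa [BExpr.sub, hθ1, hθ2] using this

end BetaAux

/-- If `E ⊢ t = t'` in unsorted unconditional equational logic, then
`β(T) ⊢_CRWL R(t,t') → true` and `β(T) ⊢_CRWL R(t',t) → true`. -/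
theorem eq_implies_beta_red (Op : ℕ → Type)
    (E : Set (BExpr Op × BExpr Op)) (G : Set (RLRule Op))
    (hE : ∀ e ∈ E, e.1.isSTerm ∧ e.2.isSTerm)
    (hG : ∀ ρ ∈ G, ρ.lhs.isSTerm ∧ ρ.rhs.isSTerm ∧
      ∀ p ∈ ρ.conds, p.1.isSTerm ∧ p.2.isSTerm)
    (t t' : BExpr Op) (ht : t.isSTerm) (ht' : t'.isSTerm)
    (hd : EqD Op E t t') :
    BRed Op (betaRules Op E G) (.R t t') .tt ∧
    BRed Op (betaRules Op E G) (.R t' t) .tt := by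
  have key : ∀ {u u' : BExpr Op}, EqD Op E u u' →
      (u.isSTerm ↔ u'.isSTerm) ∧ (u.isSTerm →
        BRed Op (betaRules Op E G) (.R u u') .tt ∧
        BRed Op (betaRules Op E G) (.R u' u) .tt) := by
    intro u u' hd
    induction hd with
    | ax hp θ hθ =>
      refine ⟨iff_of_true ?_ ?_, fun _ => BetaAux.redAx E G hp θ hθ⟩
      · exact BetaAux.sterm_sub hθ (hE _ hp).1
      · exact BetaAux.sterm_sub hθ (hE _ hp).2
    | refl s =>
      exact ⟨Iff.rfl, fun h => ⟨BetaAux.redRefl E G h, BetaAux.redRefl E G h⟩⟩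
    | symm hd ih =>
      exact ⟨ih.1.symm, fun h => ⟨(ih.2 (ih.1.mpr h)).2, (ih.2 (ih.1.mpr h)).1⟩⟩
    | trans hd1 hd2 ih1 ih2 =>
      refine ⟨ih1.1.trans ih2.1, fun h => ?_⟩
      have h' := ih1.1.mp h
      have h'' := ih2.1.mp h'
      exact ⟨BetaAux.redTrans E G h h' h'' (ih1.2 h).1 (ih2.2 h').1,
        BetaAux.redTrans E G h'' h' h (ih2.2 h').2 (ih1.2 h).2⟩
    | congr f hall ih =>
      rename_i a a'
      constructor
      · exact forall_congr' fun i => (ih i).1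
      · intro h
        have ha : ∀ i, (a i).isSTerm := h
        have ha' : ∀ i, (a' i).isSTerm := fun i => (ih i).1.mp (ha i)
        exact ⟨BetaAux.redCongr E G f ha ha' fun i => ((ih i).2 (ha i)).1,
          BetaAux.redCongr E G f ha' ha fun i => ((ih i).2 (ha i)).2⟩
  exact (key hd).2 ht
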